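/- arXiv:1512.01573 — 3 statements merged into one kernel-verified Lean document; each statement's English description precedes it below -/
import Mathlib

section
/- Let U : F_2^n → F_2^n be a map and σ a permutation of {1,…,n} such that U(x + e^i) = U(x) + e^{σ(i)} for all x ∈ F_2^n and all i (U is an isometry of the Hamming cube), and let f : F_2^n → F_2^n be a Boolean network that is U-equivariant, i.e., f ∘ U = U ∘ f. Then for every x ∈ F_2^n: (j,i) is an edge of the local interaction graph G(f)(x) if and only if (σ(j),σ(i)) is an edge of G(f)(U(x)), so σ is an isomorphism from the underlying directed graph of G(f)(x) to that of G(f)(U(x)); moreover, for every cycle C of G(f)(x), the corresponding cycle σ(C) of G(f)(U(x)) has the same sign as C. -/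
/-- States of a Boolean network on `n` components: `F_2^n`. -/
abbrev St (n : ℕ) := Fin n → ZMod 2

/-- The unit vector `e^i`. -/
def uv {n : ℕ} (i : Fin n) : St n := fun j => if j = i then 1 else 0

/-- There is an edge from `j` to `i` in the local interaction graph `G(f)(x)`,
i.e. `∂_j f_i (x) = 1`. -/
def hasEdge {n : ℕ} (f : St n → St n) (x : St n) (j i : Fin n) : Prop :=
  f (x + uv j) i ≠ f x i

/-- `(j,i)` is a positive edge of `G(f)(x)`. -/
def edgePos {n : ℕ} (f : St n → St n) (x : St n) (j i : Fin n) : Prop :=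
  hasEdge f x j i ∧ x j = f x i

/-- `(j,i)` is a negative edge of `G(f)(x)`. -/
def edgeNeg {n : ℕ} (f : St n → St n) (x : St n) (j i : Fin n) : Prop :=
  hasEdge f x j i ∧ x j ≠ f x i

/-- The local interaction graph `G(f)(x)` has a negative (elementary, directed) cycle:
a cyclic sequence of pairwise distinct vertices, each consecutive pair being an edge of
`G(f)(x)`, with an odd number of negative edges. -/
def hasNegCycleAt {n : ℕ} (f : St n → St n) (x : St n) : Prop :=
  ∃ (m : ℕ) (v : Fin (m + 1) → Fin n), Function.Injective v ∧
    (∀ k, hasEdge f x (v k) (v (k + 1))) ∧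
    Odd (Nat.card {k : Fin (m + 1) // edgeNeg f x (v k) (v (k + 1))})

/-- `f` is an and-net: each coordinate function is a product of literals. -/
def IsAndNet {n : ℕ} (f : St n → St n) : Prop :=
  ∀ i : Fin n, ∃ P N : Finset (Fin n), Disjoint P N ∧
    ∀ x : St n, f x i = (∏ j ∈ P, x j) * ∏ j ∈ N, (x j + 1)

lemma zmod2_cases (a : ZMod 2) : a = 0 ∨ a = 1 := by revert a; decide

lemma uv_add_self {n : ℕ} (a : Fin n) : uv a + uv a = (0 : St n) := by
  funext j; simp [uv]; split <;> decide

lemma key_aux {n : ℕ} (U : St n → St n) (σ : Equiv.Perm (Fin n))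
    (hU : ∀ (x : St n) (i : Fin n), U (x + uv i) = U x + uv (σ i)) (i : Fin n) :
    ∀ s : Finset (Fin n), ∀ y : St n, (∀ j ∉ s, y j = 0) →
      U y (σ i) = U 0 (σ i) + y i := by
  intro s
  induction s using Finset.induction_on with
  | empty =>
    intro y hy
    have : y = 0 := funext fun j => hy j (by simp)
    subst this; simp
  | @insert a s' ha ih =>
    intro y hy
    rcases zmod2_cases (y a) with h0 | h1
    · exact ih y (fun j hj => by
        by_cases hja : j = a
        · exact hja ▸ h0
        · exact hy j (by simp [hja, hj]))
    · set y' := y + uv a with hy'def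
      have hy' : ∀ j ∉ s', y' j = 0 := by
        intro j hj
        by_cases hja : j = a
        · subst hja; simp [hy'def, uv, h1]; decide
        · simp [hy'def, uv, hja, hy j (by simp [hja, hj])]
      have hyy : y = y' + uv a := by
        rw [hy'def, add_assoc, uv_add_self, add_zero]
      have h1' : U y (σ i) = U y' (σ i) + uv (σ a) (σ i) := by
        rw [hyy, hU]; rfl
      rw [h1', ih y' hy']
      have : y i = y' i + uv (σ a) (σ i) := by
        rw [hyy]
        simp only [Pi.add_apply, uv, EmbeddingLike.apply_eq_iff_eq]
      rw [this]; ring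

lemma key {n : ℕ} (U : St n → St n) (σ : Equiv.Perm (Fin n))
    (hU : ∀ (x : St n) (i : Fin n), U (x + uv i) = U x + uv (σ i))
    (y : St n) (i : Fin n) : U y (σ i) = U 0 (σ i) + y i :=
  key_aux U σ hU i Finset.univ y (fun j hj => absurd (Finset.mem_univ j) hj)

lemma odd_iff_cast (N : ℕ) : Odd N ↔ (N : ZMod 2) = 1 := by
  rw [Nat.odd_iff, ← ZMod.natCast_mod]
  rcases Nat.mod_two_eq_zero_or_one N with h | h <;> rw [h] <;> simp

lemma ite_ne_eq_add (a b : ZMod 2) : (if a ≠ b then (1:ZMod 2) else 0) = a + b := by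
  revert a b; decide


/-- Equivariance lemma: if `U` is an isometry of the hypercube with associated
permutation `σ` (`U(x + e^i) = U(x) + e^{σ(i)}`) and `f` is `U`-equivariant, then `σ` is
an isomorphism from the underlying directed graph of `G(f)(x)` to that of `G(f)(U(x))`,
and corresponding cycles have the same sign (same parity of the number of negative
edges). -/
theorem stmt_9 (n : ℕ) (U : St n → St n) (σ : Equiv.Perm (Fin n))
    (hU : ∀ (x : St n) (i : Fin n), U (x + uv i) = U x + uv (σ i))
    (f : St n → St n) (hequiv : f ∘ U = U ∘ f) (x : St n) :
    (∀ j i, hasEdge f x j i ↔ hasEdge f (U x) (σ j) (σ i)) ∧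
    (∀ (m : ℕ) (v : Fin (m + 1) → Fin n), Function.Injective v →
      (∀ k, hasEdge f x (v k) (v (k + 1))) →
      (Odd (Nat.card {k : Fin (m + 1) // edgeNeg f x (v k) (v (k + 1))}) ↔
        Odd (Nat.card {k : Fin (m + 1) // edgeNeg f (U x) (σ (v k)) (σ (v (k + 1)))}))) := by
  classical
  have hc := key U σ hU
  have hf : ∀ (y : St n) (i : Fin n), f (U y) (σ i) = U 0 (σ i) + f y i := by
    intro y i
    rw [show f (U y) = U (f y) from congrFun hequiv y, hc]
  have hedge : ∀ (y : St n) (j i : Fin n),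
      hasEdge f y j i ↔ hasEdge f (U y) (σ j) (σ i) := by
    intro y j i
    unfold hasEdge
    rw [show U y + uv (σ j) = U (y + uv j) from (hU y j).symm, hf, hf]
    exact not_congr (add_right_inj _).symm
  refine ⟨hedge x, ?_⟩
  intro m v hinj hve
  have hcnt : ∀ (Q : Fin (m+1) → Prop) [DecidablePred Q],
      Odd (Nat.card {k // Q k}) ↔
        (∑ k : Fin (m+1), if Q k then (1:ZMod 2) else 0) = 1 := by
    intro Q _
    rw [Nat.card_eq_fintype_card, Fintype.card_subtype, Finset.card_filter,
      odd_iff_cast, Nat.cast_sum]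
    push_cast
    rfl
  rw [hcnt, hcnt]
  have lhs : (∑ k : Fin (m+1), if edgeNeg f x (v k) (v (k+1)) then (1:ZMod 2) else 0)
      = ∑ k : Fin (m+1), (x (v k) + f x (v (k+1))) := by
    refine Finset.sum_congr rfl fun k _ => ?_
    have hiff : edgeNeg f x (v k) (v (k+1)) ↔ x (v k) ≠ f x (v (k+1)) :=
      and_iff_right (hve k)
    rw [if_congr hiff rfl rfl, ite_ne_eq_add]
  have rhs : (∑ k : Fin (m+1),
        if edgeNeg f (U x) (σ (v k)) (σ (v (k+1))) then (1:ZMod 2) else 0)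
      = ∑ k : Fin (m+1), ((U 0 (σ (v k)) + x (v k)) + (U 0 (σ (v (k+1))) + f x (v (k+1)))) := by
    refine Finset.sum_congr rfl fun k _ => ?_
    have hiff : edgeNeg f (U x) (σ (v k)) (σ (v (k+1))) ↔
        (U x) (σ (v k)) ≠ f (U x) (σ (v (k+1))) :=
      and_iff_right ((hedge x (v k) (v (k+1))).mp (hve k))
    rw [if_congr hiff rfl rfl, ite_ne_eq_add, hc, hf]
  rw [lhs, rhs]
  have hsum : ∑ k : Fin (m+1), ((U 0 (σ (v k)) + x (v k)) + (U 0 (σ (v (k+1))) + f x (v (k+1))))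
      = (∑ k : Fin (m+1), U 0 (σ (v k))) + (∑ k : Fin (m+1), U 0 (σ (v (k+1))))
        + ∑ k : Fin (m+1), (x (v k) + f x (v (k+1))) := by
    rw [← Finset.sum_add_distrib, ← Finset.sum_add_distrib]
    refine Finset.sum_congr rfl fun k _ => by ring
  have hshift : (∑ k : Fin (m+1), U 0 (σ (v (k+1)))) = ∑ k : Fin (m+1), U 0 (σ (v k)) :=
    Fintype.sum_equiv (Equiv.addRight 1) _ _ (fun k => rfl)
  rw [hsum, hshift, CharTwo.add_self_eq_zero, zero_add]
end

section
/- Fix n ≥ 7 and let a^i, b^i, c^i, d^i ∈ F_2^n be as defined. If 1 ≤ i, j, k, ℓ ≤ 2n are pairwise different integers, then the four points a^i, b^j, c^k, d^ℓ are pairwise different. -/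
/-- `e^i` for an integer index `i` (`1`-indexed, taken modulo `n`): `e^{i+n} = e^i`. -/
def eZ (n : ℕ) (i : ℤ) : St n := fun t => if ((t : ℕ) : ℤ) = (i - 1) % (n : ℤ) then 1 else 0

/-- The `2n`-periodic sequence `a^i`: for `1 ≤ i ≤ n`, `a^i = e^{{1,…,i-1}}` and
`a^{n+i}` is the antipode of `a^i`. (Its `1`-indexed coordinate `j = t+1` is `1` iff
`(i - 1 - j) mod 2n < n`.) -/
def aZ (n : ℕ) (i : ℤ) : St n :=
  fun t => if (i - 2 - ((t : ℕ) : ℤ)) % (2 * (n : ℤ)) < (n : ℤ) then 1 else 0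

/-- `b^i = a^i + e^{i+1}`. -/
def bZ (n : ℕ) (i : ℤ) : St n := aZ n i + eZ n (i + 1)

/-- `c^i = a^i + e^{i+2}`. -/
def cZ (n : ℕ) (i : ℤ) : St n := aZ n i + eZ n (i + 2)

/-- `d^i = a^i + e^{i+2} + e^{i+3}`. -/
def dZ (n : ℕ) (i : ℤ) : St n := aZ n i + eZ n (i + 2) + eZ n (i + 3)


/-! ### Auxiliary lemmas for `stmt_11` -/

lemma emod_shift' (s m : ℤ) : (s + m) % m = s % m := by
  simpa using Int.add_mul_emod_self_left (a := s) (b := m) (c := 1)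

lemma emod_trich' (x m : ℤ) (hm : 0 < m) (h1 : -m ≤ x) (h2 : x < 3*m) :
    x % m = x ∨ x % m = x - m ∨ x % m = x - 2*m ∨ x % m = x + m := by
  rcases lt_or_ge x 0 with h | h
  · right; right; right
    rw [← emod_shift']
    exact Int.emod_eq_of_lt (by omega) (by omega)
  rcases lt_or_ge x m with h' | h'
  · left; exact Int.emod_eq_of_lt h h'
  rcases lt_or_ge x (2*m) with h'' | h''
  · right; left
    have e : x % m = (x - m) % m := by rw [← emod_shift' (x - m) m]; ring_nf
    rw [e]; exact Int.emod_eq_of_lt (by omega) (by omega)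
  · right; right; left
    have e : x % m = (x - 2*m) % m := by
      rw [← emod_shift' (x - 2*m) m, ← emod_shift' (x - 2*m + m) m]; ring_nf
    rw [e]; exact Int.emod_eq_of_lt (by omega) (by omega)

lemma aZ_apply (n : ℕ) (hn : 7 ≤ n) (i : ℤ) (hi1 : 1 ≤ i) (hi2 : i ≤ 2*n) (t : Fin n) :
    aZ n i t = if (((t:ℕ):ℤ) ≤ i - 2 ∧ i - 2 - ((t:ℕ):ℤ) < n) then 1 else 0 := by
  have ht : ((t:ℕ):ℤ) < n := by exact_mod_cast t.isLt
  have ht0 : (0:ℤ) ≤ ((t:ℕ):ℤ) := Int.ofNat_nonneg _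
  have key : ((i - 2 - ((t:ℕ):ℤ)) % (2*(n:ℤ)) < (n:ℤ)) ↔
      (((t:ℕ):ℤ) ≤ i - 2 ∧ i - 2 - ((t:ℕ):ℤ) < n) := by
    rcases le_or_gt 0 (i - 2 - ((t:ℕ):ℤ)) with hx | hx
    · rw [Int.emod_eq_of_lt hx (by omega)]
      omega
    · have e : (i - 2 - ((t:ℕ):ℤ)) % (2*(n:ℤ)) = i - 2 - ((t:ℕ):ℤ) + 2*n := by
        rw [← emod_shift']
        exact Int.emod_eq_of_lt (by omega) (by omega)
      rw [e]; omega
  simp only [aZ, key]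

lemma eZ_apply (n : ℕ) (hn : 7 ≤ n) (m : ℤ) (h1 : 0 ≤ m - 1) (h2 : m - 1 < 3*n) (t : Fin n) :
    eZ n m t = if (((t:ℕ):ℤ) = m - 1 ∨ ((t:ℕ):ℤ) = m - 1 - n ∨ ((t:ℕ):ℤ) = m - 1 - 2*n)
      then 1 else 0 := by
  have ht : ((t:ℕ):ℤ) < n := by exact_mod_cast t.isLt
  have ht0 : (0:ℤ) ≤ ((t:ℕ):ℤ) := Int.ofNat_nonneg _
  have hn0 : (0:ℤ) < n := by exact_mod_cast (by omega : 0 < n)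
  have tr := emod_trich' (m-1) n hn0 (by omega) h2
  have h0 : 0 ≤ (m-1) % (n:ℤ) := Int.emod_nonneg _ (by omega)
  have hlt : (m-1) % (n:ℤ) < n := Int.emod_lt_of_pos _ hn0
  have key : (((t:ℕ):ℤ) = (m-1) % (n:ℤ)) ↔
      (((t:ℕ):ℤ) = m - 1 ∨ ((t:ℕ):ℤ) = m - 1 - n ∨ ((t:ℕ):ℤ) = m - 1 - 2*n) := by
    generalize hR : (m-1) % (n:ℤ) = R at tr h0 hlt ⊢
    omega
  simp only [eZ, key]

lemma red' (n : ℕ) (hn : 0 < n) (x : ℤ) (h1 : -(n:ℤ) ≤ x) (h2 : x < 3*n) :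
    ∃ t : Fin n, (((t:ℕ):ℤ) = x ∨ ((t:ℕ):ℤ) = x - n ∨ ((t:ℕ):ℤ) = x - 2*n ∨ ((t:ℕ):ℤ) = x + n)
      ∧ ((t:ℕ):ℤ) < n := by
  have hn0 : (0:ℤ) < n := by exact_mod_cast hn
  have tr := emod_trich' x n hn0 h1 h2
  have h0 : 0 ≤ x % (n:ℤ) := Int.emod_nonneg _ (by omega)
  have hlt : x % (n:ℤ) < n := Int.emod_lt_of_pos _ hn0
  refine ⟨⟨(x % (n:ℤ)).toNat, by omega⟩, ?_, ?_⟩ <;> simp only [Fin.val_mk] <;> omega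

lemma ind3 (p q r : Prop) [Decidable p] [Decidable q] [Decidable r]
    (h : (if p then (1:ZMod 2) else 0) = (if q then 1 else 0) + (if r then 1 else 0)) :
    p ↔ (q ↔ ¬r) := by
  by_cases hp : p <;> by_cases hq : q <;> by_cases hr : r <;>
    simp_all <;> revert h <;> decide

lemma ind4 (p q r s : Prop) [Decidable p] [Decidable q] [Decidable r] [Decidable s]
    (h : (if p then (1:ZMod 2) else 0) =
      (if q then 1 else 0) + (if r then 1 else 0) + (if s then 1 else 0)) :
    p ↔ (q ↔ (r ↔ s)) := by
  by_cases hp : p <;> by_cases hq : q <;> by_cases hr : r <;> by_cases hs : s <;>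
    simp_all <;> revert h <;> decide

lemma ind22 (p p' q r : Prop) [Decidable p] [Decidable p'] [Decidable q] [Decidable r]
    (h : (if p then (1:ZMod 2) else 0) + (if p' then 1 else 0)
      = (if q then 1 else 0) + (if r then 1 else 0)) :
    (p ↔ p') ↔ (q ↔ r) := by
  by_cases hp : p <;> by_cases hp' : p' <;> by_cases hq : q <;> by_cases hr : r <;>
    simp_all <;> revert h <;> decide

lemma ind23 (p p' q r s : Prop) [Decidable p] [Decidable p'] [Decidable q] [Decidable r]
    [Decidable s]
    (h : (if p then (1:ZMod 2) else 0) + (if p' then 1 else 0)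
      = (if q then 1 else 0) + (if r then 1 else 0) + (if s then 1 else 0)) :
    ¬(p ↔ p') ↔ (q ↔ (r ↔ s)) := by
  by_cases hp : p <;> by_cases hp' : p' <;> by_cases hq : q <;> by_cases hr : r <;>
    by_cases hs : s <;> simp_all <;> revert h <;> decide

lemma pt_ab (n : ℕ) (hn : 7 ≤ n) (i j : ℤ) (hi1 : 1 ≤ i) (hi2 : i ≤ 2*n) (hj1 : 1 ≤ j) (hj2 : j ≤ 2*n)
    (t : Fin n) (h : aZ n i t = bZ n j t) :
    ((((t:ℕ):ℤ) ≤ i - 2 ∧ i - 2 - ((t:ℕ):ℤ) < n) ↔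
      (((((t:ℕ):ℤ) ≤ j - 2 ∧ j - 2 - ((t:ℕ):ℤ) < n)) ↔
        ¬(((t:ℕ):ℤ) = j ∨ ((t:ℕ):ℤ) = j - n ∨ ((t:ℕ):ℤ) = j - 2*n))) := by
  simp only [bZ, Pi.add_apply] at h
  rw [aZ_apply n hn i hi1 hi2 t, aZ_apply n hn j hj1 hj2 t,
    eZ_apply n hn (j+1) (by omega) (by omega) t] at h
  have := ind3 _ _ _ h
  omega

lemma pt_ac (n : ℕ) (hn : 7 ≤ n) (i k : ℤ) (hi1 : 1 ≤ i) (hi2 : i ≤ 2*n) (hk1 : 1 ≤ k) (hk2 : k ≤ 2*n)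
    (t : Fin n) (h : aZ n i t = cZ n k t) :
    ((((t:ℕ):ℤ) ≤ i - 2 ∧ i - 2 - ((t:ℕ):ℤ) < n) ↔
      (((((t:ℕ):ℤ) ≤ k - 2 ∧ k - 2 - ((t:ℕ):ℤ) < n)) ↔
        ¬(((t:ℕ):ℤ) = k + 1 ∨ ((t:ℕ):ℤ) = k + 1 - n ∨ ((t:ℕ):ℤ) = k + 1 - 2*n))) := by
  simp only [cZ, Pi.add_apply] at h
  rw [aZ_apply n hn i hi1 hi2 t, aZ_apply n hn k hk1 hk2 t,
    eZ_apply n hn (k+2) (by omega) (by omega) t] at h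
  have := ind3 _ _ _ h
  omega

lemma pt_ad (n : ℕ) (hn : 7 ≤ n) (i l : ℤ) (hi1 : 1 ≤ i) (hi2 : i ≤ 2*n) (hl1 : 1 ≤ l) (hl2 : l ≤ 2*n)
    (t : Fin n) (h : aZ n i t = dZ n l t) :
    ((((t:ℕ):ℤ) ≤ i - 2 ∧ i - 2 - ((t:ℕ):ℤ) < n) ↔
      (((((t:ℕ):ℤ) ≤ l - 2 ∧ l - 2 - ((t:ℕ):ℤ) < n)) ↔
        ((((t:ℕ):ℤ) = l + 1 ∨ ((t:ℕ):ℤ) = l + 1 - n ∨ ((t:ℕ):ℤ) = l + 1 - 2*n) ↔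
         (((t:ℕ):ℤ) = l + 2 ∨ ((t:ℕ):ℤ) = l + 2 - n ∨ ((t:ℕ):ℤ) = l + 2 - 2*n)))) := by
  simp only [dZ, Pi.add_apply] at h
  rw [aZ_apply n hn i hi1 hi2 t, aZ_apply n hn l hl1 hl2 t,
    eZ_apply n hn (l+2) (by omega) (by omega) t,
    eZ_apply n hn (l+3) (by omega) (by omega) t] at h
  have := ind4 _ _ _ _ h
  omega

lemma pt_bc (n : ℕ) (hn : 7 ≤ n) (j k : ℤ) (hj1 : 1 ≤ j) (hj2 : j ≤ 2*n) (hk1 : 1 ≤ k) (hk2 : k ≤ 2*n)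
    (t : Fin n) (h : bZ n j t = cZ n k t) :
    (((((t:ℕ):ℤ) ≤ j - 2 ∧ j - 2 - ((t:ℕ):ℤ) < n) ↔
        (((t:ℕ):ℤ) = j ∨ ((t:ℕ):ℤ) = j - n ∨ ((t:ℕ):ℤ) = j - 2*n)) ↔
      ((((t:ℕ):ℤ) ≤ k - 2 ∧ k - 2 - ((t:ℕ):ℤ) < n) ↔
        (((t:ℕ):ℤ) = k + 1 ∨ ((t:ℕ):ℤ) = k + 1 - n ∨ ((t:ℕ):ℤ) = k + 1 - 2*n))) := by
  simp only [bZ, cZ, Pi.add_apply] at h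
  rw [aZ_apply n hn j hj1 hj2 t, aZ_apply n hn k hk1 hk2 t,
    eZ_apply n hn (j+1) (by omega) (by omega) t,
    eZ_apply n hn (k+2) (by omega) (by omega) t] at h
  have := ind22 _ _ _ _ h
  omega

lemma pt_bd (n : ℕ) (hn : 7 ≤ n) (j l : ℤ) (hj1 : 1 ≤ j) (hj2 : j ≤ 2*n) (hl1 : 1 ≤ l) (hl2 : l ≤ 2*n)
    (t : Fin n) (h : bZ n j t = dZ n l t) :
    (¬((((t:ℕ):ℤ) ≤ j - 2 ∧ j - 2 - ((t:ℕ):ℤ) < n) ↔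
        (((t:ℕ):ℤ) = j ∨ ((t:ℕ):ℤ) = j - n ∨ ((t:ℕ):ℤ) = j - 2*n)) ↔
      ((((t:ℕ):ℤ) ≤ l - 2 ∧ l - 2 - ((t:ℕ):ℤ) < n) ↔
        ((((t:ℕ):ℤ) = l + 1 ∨ ((t:ℕ):ℤ) = l + 1 - n ∨ ((t:ℕ):ℤ) = l + 1 - 2*n) ↔
         (((t:ℕ):ℤ) = l + 2 ∨ ((t:ℕ):ℤ) = l + 2 - n ∨ ((t:ℕ):ℤ) = l + 2 - 2*n)))) := by
  simp only [bZ, dZ, Pi.add_apply] at h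
  rw [aZ_apply n hn j hj1 hj2 t, aZ_apply n hn l hl1 hl2 t,
    eZ_apply n hn (j+1) (by omega) (by omega) t,
    eZ_apply n hn (l+2) (by omega) (by omega) t,
    eZ_apply n hn (l+3) (by omega) (by omega) t] at h
  have := ind23 _ _ _ _ _ h
  omega

lemma pt_cd (n : ℕ) (hn : 7 ≤ n) (k l : ℤ) (hk1 : 1 ≤ k) (hk2 : k ≤ 2*n) (hl1 : 1 ≤ l) (hl2 : l ≤ 2*n)
    (t : Fin n) (h : cZ n k t = dZ n l t) :
    (¬((((t:ℕ):ℤ) ≤ k - 2 ∧ k - 2 - ((t:ℕ):ℤ) < n) ↔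
        (((t:ℕ):ℤ) = k + 1 ∨ ((t:ℕ):ℤ) = k + 1 - n ∨ ((t:ℕ):ℤ) = k + 1 - 2*n)) ↔
      ((((t:ℕ):ℤ) ≤ l - 2 ∧ l - 2 - ((t:ℕ):ℤ) < n) ↔
        ((((t:ℕ):ℤ) = l + 1 ∨ ((t:ℕ):ℤ) = l + 1 - n ∨ ((t:ℕ):ℤ) = l + 1 - 2*n) ↔
         (((t:ℕ):ℤ) = l + 2 ∨ ((t:ℕ):ℤ) = l + 2 - n ∨ ((t:ℕ):ℤ) = l + 2 - 2*n)))) := by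
  simp only [cZ, dZ, Pi.add_apply] at h
  rw [aZ_apply n hn k hk1 hk2 t, aZ_apply n hn l hl1 hl2 t,
    eZ_apply n hn (k+2) (by omega) (by omega) t,
    eZ_apply n hn (l+2) (by omega) (by omega) t,
    eZ_apply n hn (l+3) (by omega) (by omega) t] at h
  have := ind23 _ _ _ _ _ h
  omega


lemma ne_ab (n : ℕ) (hn : 7 ≤ n) (i j : ℤ) (hi1 : 1 ≤ i) (hi2 : i ≤ 2*n)
    (hj1 : 1 ≤ j) (hj2 : j ≤ 2*n) (hij : i ≠ j) : aZ n i ≠ bZ n j := by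
  intro h
  obtain ⟨t1, ht1, ht1b⟩ := red' n (by omega) (j-2) (by omega) (by omega)
  obtain ⟨t2, ht2, ht2b⟩ := red' n (by omega) (j-1) (by omega) (by omega)
  have e1 := pt_ab n hn i j hi1 hi2 hj1 hj2 t1 (congrFun h t1)
  have e2 := pt_ab n hn i j hi1 hi2 hj1 hj2 t2 (congrFun h t2)
  have ht10 : (0:ℤ) ≤ ((t1:ℕ):ℤ) := Int.ofNat_nonneg _
  have ht20 : (0:ℤ) ≤ ((t2:ℕ):ℤ) := Int.ofNat_nonneg _
  rcases ht1 with g1|g1|g1|g1 <;>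
    rcases ht2 with g2|g2|g2|g2 <;>
    omega

lemma ne_ac (n : ℕ) (hn : 7 ≤ n) (i k : ℤ) (hi1 : 1 ≤ i) (hi2 : i ≤ 2*n)
    (hk1 : 1 ≤ k) (hk2 : k ≤ 2*n) (hik : i ≠ k) : aZ n i ≠ cZ n k := by
  intro h
  obtain ⟨t1, ht1, ht1b⟩ := red' n (by omega) (k-2) (by omega) (by omega)
  obtain ⟨t2, ht2, ht2b⟩ := red' n (by omega) (k-1) (by omega) (by omega)
  have e1 := pt_ac n hn i k hi1 hi2 hk1 hk2 t1 (congrFun h t1)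
  have e2 := pt_ac n hn i k hi1 hi2 hk1 hk2 t2 (congrFun h t2)
  have ht10 : (0:ℤ) ≤ ((t1:ℕ):ℤ) := Int.ofNat_nonneg _
  have ht20 : (0:ℤ) ≤ ((t2:ℕ):ℤ) := Int.ofNat_nonneg _
  rcases ht1 with g1|g1|g1|g1 <;>
    rcases ht2 with g2|g2|g2|g2 <;>
    omega

lemma ne_ad (n : ℕ) (hn : 7 ≤ n) (i l : ℤ) (hi1 : 1 ≤ i) (hi2 : i ≤ 2*n)
    (hl1 : 1 ≤ l) (hl2 : l ≤ 2*n) (hil : i ≠ l) : aZ n i ≠ dZ n l := by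
  intro h
  obtain ⟨t1, ht1, ht1b⟩ := red' n (by omega) (l-2) (by omega) (by omega)
  obtain ⟨t2, ht2, ht2b⟩ := red' n (by omega) (l-1) (by omega) (by omega)
  have e1 := pt_ad n hn i l hi1 hi2 hl1 hl2 t1 (congrFun h t1)
  have e2 := pt_ad n hn i l hi1 hi2 hl1 hl2 t2 (congrFun h t2)
  have ht10 : (0:ℤ) ≤ ((t1:ℕ):ℤ) := Int.ofNat_nonneg _
  have ht20 : (0:ℤ) ≤ ((t2:ℕ):ℤ) := Int.ofNat_nonneg _
  rcases ht1 with g1|g1|g1|g1 <;>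
    rcases ht2 with g2|g2|g2|g2 <;>
    omega

lemma ne_bc (n : ℕ) (hn : 7 ≤ n) (j k : ℤ) (hj1 : 1 ≤ j) (hj2 : j ≤ 2*n)
    (hk1 : 1 ≤ k) (hk2 : k ≤ 2*n) (hjk : j ≠ k) : bZ n j ≠ cZ n k := by
  intro h
  obtain ⟨t1, ht1, ht1b⟩ := red' n (by omega) (j-2) (by omega) (by omega)
  obtain ⟨t2, ht2, ht2b⟩ := red' n (by omega) (j-1) (by omega) (by omega)
  obtain ⟨t3, ht3, ht3b⟩ := red' n (by omega) (k+3) (by omega) (by omega)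
  have e1 := pt_bc n hn j k hj1 hj2 hk1 hk2 t1 (congrFun h t1)
  have e2 := pt_bc n hn j k hj1 hj2 hk1 hk2 t2 (congrFun h t2)
  have e3 := pt_bc n hn j k hj1 hj2 hk1 hk2 t3 (congrFun h t3)
  have ht10 : (0:ℤ) ≤ ((t1:ℕ):ℤ) := Int.ofNat_nonneg _
  have ht20 : (0:ℤ) ≤ ((t2:ℕ):ℤ) := Int.ofNat_nonneg _
  have ht30 : (0:ℤ) ≤ ((t3:ℕ):ℤ) := Int.ofNat_nonneg _
  rcases ht1 with g1|g1|g1|g1 <;>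
    rcases ht2 with g2|g2|g2|g2 <;>
    rcases ht3 with g3|g3|g3|g3 <;>
    omega

set_option maxHeartbeats 3200000 in
lemma ne_bd (n : ℕ) (hn : 7 ≤ n) (j l : ℤ) (hj1 : 1 ≤ j) (hj2 : j ≤ 2*n)
    (hl1 : 1 ≤ l) (hl2 : l ≤ 2*n) (hjl : j ≠ l) : bZ n j ≠ dZ n l := by
  intro h
  obtain ⟨t1, ht1, ht1b⟩ := red' n (by omega) (j-2) (by omega) (by omega)
  obtain ⟨t2, ht2, ht2b⟩ := red' n (by omega) (j-1) (by omega) (by omega)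
  obtain ⟨t3, ht3, ht3b⟩ := red' n (by omega) (j) (by omega) (by omega)
  have e1 := pt_bd n hn j l hj1 hj2 hl1 hl2 t1 (congrFun h t1)
  have e2 := pt_bd n hn j l hj1 hj2 hl1 hl2 t2 (congrFun h t2)
  have e3 := pt_bd n hn j l hj1 hj2 hl1 hl2 t3 (congrFun h t3)
  have ht10 : (0:ℤ) ≤ ((t1:ℕ):ℤ) := Int.ofNat_nonneg _
  have ht20 : (0:ℤ) ≤ ((t2:ℕ):ℤ) := Int.ofNat_nonneg _
  have ht30 : (0:ℤ) ≤ ((t3:ℕ):ℤ) := Int.ofNat_nonneg _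
  rcases ht1 with g1|g1|g1|g1 <;>
    rcases ht2 with g2|g2|g2|g2 <;>
    rcases ht3 with g3|g3|g3|g3 <;>
    omega

lemma ne_cd (n : ℕ) (hn : 7 ≤ n) (k l : ℤ) (hk1 : 1 ≤ k) (hk2 : k ≤ 2*n)
    (hl1 : 1 ≤ l) (hl2 : l ≤ 2*n) (hkl : k ≠ l) : cZ n k ≠ dZ n l := by
  intro h
  obtain ⟨t1, ht1, ht1b⟩ := red' n (by omega) (k-1) (by omega) (by omega)
  obtain ⟨t2, ht2, ht2b⟩ := red' n (by omega) (k+2) (by omega) (by omega)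
  obtain ⟨t3, ht3, ht3b⟩ := red' n (by omega) (l-1) (by omega) (by omega)
  have e1 := pt_cd n hn k l hk1 hk2 hl1 hl2 t1 (congrFun h t1)
  have e2 := pt_cd n hn k l hk1 hk2 hl1 hl2 t2 (congrFun h t2)
  have e3 := pt_cd n hn k l hk1 hk2 hl1 hl2 t3 (congrFun h t3)
  have ht10 : (0:ℤ) ≤ ((t1:ℕ):ℤ) := Int.ofNat_nonneg _
  have ht20 : (0:ℤ) ≤ ((t2:ℕ):ℤ) := Int.ofNat_nonneg _
  have ht30 : (0:ℤ) ≤ ((t3:ℕ):ℤ) := Int.ofNat_nonneg _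
  rcases ht1 with g1|g1|g1|g1 <;>
    rcases ht2 with g2|g2|g2|g2 <;>
    rcases ht3 with g3|g3|g3|g3 <;>
    omega

/-- If `n ≥ 7` and `1 ≤ i, j, k, l ≤ 2n` are pairwise different, then the four points
`a^i, b^j, c^k, d^l` are pairwise different. -/
theorem stmt_11 (n : ℕ) (hn : 7 ≤ n) (i j k l : ℤ)
    (hi : 1 ≤ i ∧ i ≤ 2 * n) (hj : 1 ≤ j ∧ j ≤ 2 * n)
    (hk : 1 ≤ k ∧ k ≤ 2 * n) (hl : 1 ≤ l ∧ l ≤ 2 * n)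
    (hij : i ≠ j) (hik : i ≠ k) (hil : i ≠ l)
    (hjk : j ≠ k) (hjl : j ≠ l) (hkl : k ≠ l) :
    aZ n i ≠ bZ n j ∧ aZ n i ≠ cZ n k ∧ aZ n i ≠ dZ n l ∧
    bZ n j ≠ cZ n k ∧ bZ n j ≠ dZ n l ∧ cZ n k ≠ dZ n l := by
  exact ⟨ne_ab n hn i j hi.1 hi.2 hj.1 hj.2 hij,
    ne_ac n hn i k hi.1 hi.2 hk.1 hk.2 hik,
    ne_ad n hn i l hi.1 hi.2 hl.1 hl.2 hil,
    ne_bc n hn j k hj.1 hj.2 hk.1 hk.2 hjk,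
    ne_bd n hn j l hj.1 hj.2 hl.1 hl.2 hjl,
    ne_cd n hn k l hk.1 hk.2 hl.1 hl.2 hkl⟩
end

section
/- Let f : F_2^n → F_2^n be an and-net and let C be a cycle of its global interaction graph G(f). Then C is local (i.e., C is a cycle of the local interaction graph G(f)(x) for some x ∈ F_2^n) if and only if C has no delocalizing triple in G(f). -/
/-- `(j,i)` is a positive edge of the global interaction graph `G(f)`. -/
def gEdgePos {n : ℕ} (f : St n → St n) (j i : Fin n) : Prop := ∃ x, edgePos f x j i

/-- `(j,i)` is a negative edge of the global interaction graph `G(f)`. -/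
def gEdgeNeg {n : ℕ} (f : St n → St n) (j i : Fin n) : Prop := ∃ x, edgeNeg f x j i

/-- `(j,i)` is an edge of the global interaction graph `G(f)`. -/
def gEdge {n : ℕ} (f : St n → St n) (j i : Fin n) : Prop := gEdgePos f j i ∨ gEdgeNeg f j i

/-- `a` is a vertex of the cycle described by `v`. -/
def CycVertex {n m : ℕ} (v : Fin (m + 1) → Fin n) (a : Fin n) : Prop := ∃ k, v k = a

/-- `(a, b)` is an edge of the cycle described by `v`. -/
def CycEdge {n m : ℕ} (v : Fin (m + 1) → Fin n) (a b : Fin n) : Prop :=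
  ∃ k, v k = a ∧ v (k + 1) = b

/-- `(i, j, k)` is a delocalizing triple of the cycle `v` in `G(f)`: `j, k` are distinct
vertices of the cycle, and `(i,j)`, `(i,k)` are edges of `G(f)` which are not edges of
the cycle and have different signs. -/
def DelocTriple {n : ℕ} (f : St n → St n) {m : ℕ} (v : Fin (m + 1) → Fin n)
    (i j k : Fin n) : Prop :=
  CycVertex v j ∧ CycVertex v k ∧ j ≠ k ∧
  ¬ CycEdge v i j ∧ ¬ CycEdge v i k ∧
  ((gEdgePos f i j ∧ gEdgeNeg f i k) ∨ (gEdgeNeg f i j ∧ gEdgePos f i k))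

/-! In an and-net, `∂_j f_i (x) = 1` exactly when `j` is a literal of `f_i` and all other
literals of `f_i` hold at `x`; the sign of the edge `(j, i)` is then the sign of that literal,
independently of `x`. Hence a cycle is local iff one state satisfies, for each vertex of the
cycle, all its literals except the one read from its predecessor. These constraints clash
exactly when some `i` is read positively by one cycle vertex and negatively by another, both
off the cycle: a delocalizing triple. -/

open Finset

section LiteralProduct

variable {n : ℕ}

def litProd (P N : Finset (Fin n)) (x : St n) : ZMod 2 :=
  (∏ j ∈ P, x j) * ∏ j ∈ N, (x j + 1)

def LitSat (P N : Finset (Fin n)) (x : St n) : Prop :=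
  (∀ l ∈ P, x l = 1) ∧ ∀ l ∈ N, x l = 0

lemma zmod_two_ne_zero_iff (a : ZMod 2) : a ≠ 0 ↔ a = 1 := by
  revert a; decide

lemma add_uv_apply_self (x : St n) (j : Fin n) : (x + uv j) j = x j + 1 := by
  simp [uv]

lemma add_uv_apply_of_ne (x : St n) {j l : Fin n} (h : l ≠ j) : (x + uv j) l = x l := by
  simp [uv, h]

lemma litProd_add_uv_of_notMem {P N : Finset (Fin n)} {j : Fin n} (hP : j ∉ P) (hN : j ∉ N)
    (x : St n) : litProd P N (x + uv j) = litProd P N x := by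
  unfold litProd
  congr 1 <;> refine prod_congr rfl fun l hl => ?_
  · rw [add_uv_apply_of_ne x (ne_of_mem_of_not_mem hl hP)]
  · rw [add_uv_apply_of_ne x (ne_of_mem_of_not_mem hl hN)]

lemma litProd_of_mem_left {P N : Finset (Fin n)} (hPN : Disjoint P N) {j : Fin n} (hj : j ∈ P)
    (x : St n) : litProd P N x = x j * litProd (P.erase j) (N.erase j) x := by
  rw [litProd, litProd, ← mul_prod_erase P _ hj,
    erase_eq_of_notMem (disjoint_left.mp hPN hj), mul_assoc]

lemma litProd_of_mem_right {P N : Finset (Fin n)} (hPN : Disjoint P N) {j : Fin n} (hj : j ∈ N)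
    (x : St n) : litProd P N x = (x j + 1) * litProd (P.erase j) (N.erase j) x := by
  rw [litProd, litProd, ← mul_prod_erase N _ hj,
    erase_eq_of_notMem (disjoint_right.mp hPN hj), mul_left_comm]

lemma litProd_add_uv_sub {P N : Finset (Fin n)} (hPN : Disjoint P N) {j : Fin n}
    (hj : j ∈ P ∪ N) (x : St n) :
    litProd P N (x + uv j) - litProd P N x = litProd (P.erase j) (N.erase j) x := by
  have hrest := litProd_add_uv_of_notMem (notMem_erase j P) (notMem_erase j N) x
  rcases mem_union.mp hj with hj | hj
  · rw [litProd_of_mem_left hPN hj, litProd_of_mem_left hPN hj, hrest, add_uv_apply_self]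
    ring
  · rw [litProd_of_mem_right hPN hj, litProd_of_mem_right hPN hj, hrest, add_uv_apply_self]
    ring

lemma litProd_ne_zero_iff {P N : Finset (Fin n)} {x : St n} :
    litProd P N x ≠ 0 ↔ LitSat P N x := by
  simp only [litProd, LitSat, mul_ne_zero_iff, prod_ne_zero_iff, zmod_two_ne_zero_iff,
    add_eq_right]

end LiteralProduct

section Coordinate

variable {n : ℕ} {f : St n → St n} {i : Fin n} {P N : Finset (Fin n)}

lemma hasEdge_iff_of_litProd (hPN : Disjoint P N) (hf : ∀ x, f x i = litProd P N x)
    (x : St n) (j : Fin n) :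
    hasEdge f x j i ↔ j ∈ P ∪ N ∧ LitSat (P.erase j) (N.erase j) x := by
  rw [hasEdge, hf, hf, ← sub_ne_zero]
  by_cases hj : j ∈ P ∪ N
  · rw [litProd_add_uv_sub hPN hj, litProd_ne_zero_iff]
    exact (and_iff_right hj).symm
  · obtain ⟨hP, hN⟩ : j ∉ P ∧ j ∉ N := by simpa using hj
    simp [litProd_add_uv_of_notMem hP hN, hj]

lemma apply_eq_of_hasEdge (hPN : Disjoint P N) (hf : ∀ x, f x i = litProd P N x)
    {x : St n} {j : Fin n} (he : hasEdge f x j i) :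
    (j ∈ P → f x i = x j) ∧ (j ∈ N → f x i = x j + 1) := by
  have hsat := ((hasEdge_iff_of_litProd hPN hf x j).mp he).2
  have hrest : litProd (P.erase j) (N.erase j) x = 1 :=
    (zmod_two_ne_zero_iff _).mp (litProd_ne_zero_iff.mpr hsat)
  refine ⟨fun hj => ?_, fun hj => ?_⟩
  · rw [hf, litProd_of_mem_left hPN hj, hrest, mul_one]
  · rw [hf, litProd_of_mem_right hPN hj, hrest, mul_one]

lemma hasEdge_indicator (hPN : Disjoint P N) (hf : ∀ x, f x i = litProd P N x)
    {j : Fin n} (hj : j ∈ P ∪ N) :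
    hasEdge f (fun l => if l ∈ P then 1 else 0) j i := by
  refine (hasEdge_iff_of_litProd hPN hf _ j).mpr ⟨hj, fun l hl => ?_, fun l hl => ?_⟩
  · exact if_pos (mem_of_mem_erase hl)
  · exact if_neg (disjoint_right.mp hPN (mem_of_mem_erase hl))

lemma gEdgePos_iff_of_litProd (hPN : Disjoint P N) (hf : ∀ x, f x i = litProd P N x)
    (j : Fin n) : gEdgePos f j i ↔ j ∈ P := by
  constructor
  · rintro ⟨x, he, hsign⟩
    refine (mem_union.mp ((hasEdge_iff_of_litProd hPN hf x j).mp he).1).resolve_right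
      fun hj => ?_
    rw [(apply_eq_of_hasEdge hPN hf he).2 hj] at hsign
    simp at hsign
  · intro hj
    have he := hasEdge_indicator hPN hf (mem_union_left N hj)
    exact ⟨_, he, ((apply_eq_of_hasEdge hPN hf he).1 hj).symm⟩

lemma gEdgeNeg_iff_of_litProd (hPN : Disjoint P N) (hf : ∀ x, f x i = litProd P N x)
    (j : Fin n) : gEdgeNeg f j i ↔ j ∈ N := by
  constructor
  · rintro ⟨x, he, hsign⟩
    refine (mem_union.mp ((hasEdge_iff_of_litProd hPN hf x j).mp he).1).resolve_left
      fun hj => hsign ((apply_eq_of_hasEdge hPN hf he).1 hj).symm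
  · intro hj
    have he := hasEdge_indicator hPN hf (mem_union_right P hj)
    refine ⟨_, he, ?_⟩
    rw [(apply_eq_of_hasEdge hPN hf he).2 hj]
    simp

end Coordinate

section Cycle

variable {n : ℕ} {f : St n → St n} {P N : Fin n → Finset (Fin n)} {m : ℕ}
  {v : Fin (m + 1) → Fin n}

lemma cycEdge_succ_iff (hinj : Function.Injective v) (a : Fin (m + 1)) (i : Fin n) :
    CycEdge v i (v (a + 1)) ↔ i = v a := by
  constructor
  · rintro ⟨k, rfl, hk⟩
    rw [add_right_cancel (hinj hk)]
  · rintro rfl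
    exact ⟨a, rfl, rfl⟩

lemma litSat_of_not_cycEdge (hPN : ∀ i, Disjoint (P i) (N i))
    (hf : ∀ i x, f x i = litProd (P i) (N i) x) {x : St n}
    (hx : ∀ k, hasEdge f x (v k) (v (k + 1))) {i j : Fin n} (hj : CycVertex v j)
    (hij : ¬ CycEdge v i j) : (i ∈ P j → x i = 1) ∧ (i ∈ N j → x i = 0) := by
  obtain ⟨a, rfl⟩ := hj
  have hpred := hx (a - 1)
  rw [sub_add_cancel] at hpred
  have hsat := ((hasEdge_iff_of_litProd (hPN _) (hf _) x _).mp hpred).2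
  have hi : i ≠ v (a - 1) := fun h => hij ⟨a - 1, h.symm, by rw [sub_add_cancel]⟩
  exact ⟨fun h => hsat.1 i (mem_erase.mpr ⟨hi, h⟩), fun h => hsat.2 i (mem_erase.mpr ⟨hi, h⟩)⟩

lemma not_delocTriple_of_local (hPN : ∀ i, Disjoint (P i) (N i))
    (hf : ∀ i x, f x i = litProd (P i) (N i) x) {x : St n}
    (hx : ∀ k, hasEdge f x (v k) (v (k + 1))) (i j k : Fin n) : ¬ DelocTriple f v i j k := by
  rintro ⟨hj, hk, -, hij, hik, hsign⟩
  simp only [gEdgePos_iff_of_litProd (hPN _) (hf _), gEdgeNeg_iff_of_litProd (hPN _) (hf _)]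
    at hsign
  rcases hsign with ⟨hpos, hneg⟩ | ⟨hneg, hpos⟩
  · exact one_ne_zero <| ((litSat_of_not_cycEdge hPN hf hx hj hij).1 hpos).symm.trans
      ((litSat_of_not_cycEdge hPN hf hx hk hik).2 hneg)
  · exact one_ne_zero <| ((litSat_of_not_cycEdge hPN hf hx hk hik).1 hpos).symm.trans
      ((litSat_of_not_cycEdge hPN hf hx hj hij).2 hneg)

lemma exists_local_of_forall_not_delocTriple (hPN : ∀ i, Disjoint (P i) (N i))
    (hf : ∀ i x, f x i = litProd (P i) (N i) x) (hinj : Function.Injective v)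
    (hedges : ∀ k, gEdge f (v k) (v (k + 1))) (hno : ¬ ∃ i j k, DelocTriple f v i j k) :
    ∃ x : St n, ∀ k, hasEdge f x (v k) (v (k + 1)) := by
  -- Switch on exactly the inputs that some cycle vertex reads positively from off the cycle.
  refine ⟨fun l => if ∃ c, l ∈ P (v (c + 1)) ∧ l ≠ v c then 1 else 0, fun k => ?_⟩
  have hmem : v k ∈ P (v (k + 1)) ∪ N (v (k + 1)) := by
    rcases hedges k with h | h
    · exact mem_union_left _ ((gEdgePos_iff_of_litProd (hPN _) (hf _) _).mp h)
    · exact mem_union_right _ ((gEdgeNeg_iff_of_litProd (hPN _) (hf _) _).mp h)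
  refine (hasEdge_iff_of_litProd (hPN _) (hf _) _ _).mpr ⟨hmem,
    fun l hl => if_pos ⟨k, mem_of_mem_erase hl, ne_of_mem_erase hl⟩, fun l hl => if_neg ?_⟩
  rintro ⟨c, hlc, hlc'⟩
  obtain ⟨hlk, hl⟩ := mem_erase.mp hl
  refine hno ⟨l, v (c + 1), v (k + 1), ⟨c + 1, rfl⟩, ⟨k + 1, rfl⟩, fun h => ?_,
    mt (cycEdge_succ_iff hinj c l).mp hlc', mt (cycEdge_succ_iff hinj k l).mp hlk,
    Or.inl ⟨(gEdgePos_iff_of_litProd (hPN _) (hf _) _).mpr hlc,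
      (gEdgeNeg_iff_of_litProd (hPN _) (hf _) _).mpr hl⟩⟩
  rw [h] at hlc
  exact disjoint_left.mp (hPN _) hlc hl

end Cycle

/-- For an and-net `f`, a cycle `C` of the global interaction graph `G(f)` (given by an
injective `v` whose consecutive pairs are edges of `G(f)`) is local (i.e. all its edges
lie in `G(f)(x)` for some single `x`) if and only if it has no delocalizing triple. -/
theorem stmt_15 (n : ℕ) (f : St n → St n) (hand : IsAndNet f)
    (m : ℕ) (v : Fin (m + 1) → Fin n) (hinj : Function.Injective v)
    (hedges : ∀ k, gEdge f (v k) (v (k + 1))) :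
    (∃ x : St n, ∀ k, hasEdge f x (v k) (v (k + 1))) ↔
      ¬ ∃ i j k : Fin n, DelocTriple f v i j k := by
  choose P N hPN hf using hand
  exact ⟨fun ⟨x, hx⟩ ⟨i, j, k, h⟩ => not_delocTriple_of_local hPN hf hx i j k h,
    exists_local_of_forall_not_delocTriple hPN hf hinj hedges⟩
end
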